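/- Fix positive integers M and K, complex column vectors h_1,…,h_K ∈ ℂ^M, a real constant c > 0, and target rates r_1,…,r_K > 0. Let Ŝ ⊆ {1,…,K} and let l ∈ {1,…,K} ∖ Ŝ satisfy r_l > R_l^{Ŝ}. Then for every set D ⊆ {1,…,K} ∖ Ŝ with l ∈ D, the joint-decodability condition fails for D: there exists S ⊆ D (namely S = {l}) with Σ_{k∈S} r_k > R_S^{{1,…,K}∖D}. In particular, if the users in Ŝ are in outage (their interference cannot be cancelled), then user l is necessarily in outage as well. -/

import Mathlib

open Matrix BigOperators

/-- `gram h T = ∑ k ∈ T, h k (h k)^H`, the Gram (interference covariance) matrix of the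
channel vectors of the users in `T`. -/
noncomputable def gram {M K : ℕ} (h : Fin K → Fin M → ℂ)
    (T : Finset (Fin K)) : Matrix (Fin M) (Fin M) ℂ :=
  ∑ k ∈ T, Matrix.vecMulVec (h k) (star (h k))

/-- Achievable (sum) rate of the user group `S` under interference from the user group `T`:
`R_S^T = log₂ (det (I + c (G_S + G_T)) / det (I + c G_T))`, both determinants being
positive reals (as determinants of `I` plus a positive semidefinite Hermitian matrix). -/
noncomputable def rate {M K : ℕ} (h : Fin K → Fin M → ℂ) (c : ℝ)
    (S T : Finset (Fin K)) : ℝ :=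
  Real.logb 2
    (((1 + (c : ℂ) • (gram h S + gram h T)).det).re /
      ((1 + (c : ℂ) • gram h T).det).re)

/-!
Only `S = {l}` is needed. By the matrix determinant lemma,
`R_l^T = log₂ (1 + c h_lᴴ (I + c G_T)⁻¹ h_l)`. Enlarging `T` enlarges `I + c G_T` in the Loewner
order, which shrinks its inverse, so `R_l^T` is antitone in `T`. As `Ŝ ⊆ univ ∖ D`, this gives
`R_l^{univ ∖ D} ≤ R_l^{Ŝ} < r_l`.
-/

open scoped ComplexOrder

namespace Matrix

variable {n : Type*} [Fintype n] [DecidableEq n]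

theorem det_add_smul_vecMulVec {R : Type*} [CommRing R] {A : Matrix n n R} (hA : IsUnit A.det)
    (a : R) (u v : n → R) :
    (A + a • vecMulVec u v).det = A.det * (1 + a * (v ⬝ᵥ A⁻¹ *ᵥ u)) := by
  have hrank_one : a • vecMulVec u v = replicateCol Unit (a • u) * replicateRow Unit v := by
    rw [← vecMulVec_eq, smul_vecMulVec]
  rw [hrank_one, det_add_replicateCol_mul_replicateRow hA]
  congr 1
  rw [det_unique]
  simp only [replicateCol_smul, Matrix.mul_smul, PUnit.default_eq_unit, add_apply, one_apply_eq,
    smul_apply, mul_apply, replicateRow_apply, replicateCol_apply, Finset.sum_mul, smul_eq_mul,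
    Finset.mul_sum, dotProduct, mulVec, add_right_inj]
  rw [Finset.sum_comm]
  simp only [mul_assoc]

theorem PosDef.dotProduct_inv_mulVec_le {A B : Matrix n n ℂ} (hA : A.PosDef)
    (hAB : (B - A).PosSemidef) (x : n → ℂ) :
    star x ⬝ᵥ B⁻¹ *ᵥ x ≤ star x ⬝ᵥ A⁻¹ *ᵥ x := by
  open scoped MatrixOrder Matrix.Norms.L2Operator in
  have hinv : B⁻¹ ≤ A⁻¹ := by
    simpa only [nonsing_inv_eq_ringInverse] using
      CStarAlgebra.ringInverse_le_ringInverse (le_iff.2 hAB) (isStrictlyPositive_iff_posDef.2 hA)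
  have := (le_iff.1 hinv).dotProduct_mulVec_nonneg x
  rwa [sub_mulVec, dotProduct_sub, sub_nonneg] at this

end Matrix

section Rate

variable {M K : ℕ} (h : Fin K → Fin M → ℂ) {c : ℝ}

theorem posSemidef_gram (T : Finset (Fin K)) : (gram h T).PosSemidef :=
  Matrix.posSemidef_sum T fun k _ => Matrix.posSemidef_vecMulVec_self_star (h k)

theorem gram_singleton (k : Fin K) : gram h {k} = Matrix.vecMulVec (h k) (star (h k)) :=
  Finset.sum_singleton _ _

theorem gram_sdiff_add {T T' : Finset (Fin K)} (hT : T ⊆ T') :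
    gram h (T' \ T) + gram h T = gram h T' :=
  Finset.sum_sdiff hT

theorem posDef_one_add_smul_gram (hc : 0 ≤ c) (T : Finset (Fin K)) :
    (1 + (c : ℂ) • gram h T).PosDef :=
  Matrix.PosDef.one.add_posSemidef ((posSemidef_gram h T).smul (by exact_mod_cast hc))

theorem rate_singleton (hc : 0 ≤ c) (l : Fin K) (T : Finset (Fin K)) :
    rate h c {l} T =
      Real.logb 2 (1 + c * (star (h l) ⬝ᵥ (1 + (c : ℂ) • gram h T)⁻¹ *ᵥ h l).re) := by
  have hadd : 1 + (c : ℂ) • (gram h {l} + gram h T) =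
      1 + (c : ℂ) • gram h T + (c : ℂ) • vecMulVec (h l) (star (h l)) := by
    rw [gram_singleton, smul_add]
    abel
  have hA := posDef_one_add_smul_gram h hc T
  obtain ⟨hre, him⟩ := Complex.pos_iff.1 hA.det_pos
  rw [rate, hadd, det_add_smul_vecMulVec hA.det_pos.ne'.isUnit, Complex.mul_re, ← him, zero_mul,
    sub_zero, Complex.add_re, Complex.one_re, Complex.re_ofReal_mul, mul_div_cancel_left₀ _ hre.ne']

theorem rate_singleton_antitone (hc : 0 ≤ c) (l : Fin K) {T T' : Finset (Fin K)} (hT : T ⊆ T') :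
    rate h c {l} T' ≤ rate h c {l} T := by
  have hA := posDef_one_add_smul_gram h hc T
  have hB := posDef_one_add_smul_gram h hc T'
  have hBA : (1 + (c : ℂ) • gram h T' - (1 + (c : ℂ) • gram h T)).PosSemidef := by
    rw [← gram_sdiff_add h hT]
    simpa only [smul_add, add_sub_add_left_eq_sub, add_sub_cancel_right] using
      (posSemidef_gram h (T' \ T)).smul (by exact_mod_cast hc : (0 : ℂ) ≤ c)
  obtain ⟨hquad, -⟩ := Complex.le_def.1 (hA.dotProduct_inv_mulVec_le hBA (h l))
  obtain ⟨hnonneg, -⟩ := Complex.nonneg_iff.1 (hB.inv.posSemidef.dotProduct_mulVec_nonneg (h l))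
  rw [rate_singleton h hc, rate_singleton h hc]
  exact Real.logb_le_logb_of_le one_lt_two (by positivity)
    (by gcongr 1 + c * ?_)

end Rate

theorem stmt_11_general {M K : ℕ} (h : Fin K → Fin M → ℂ)
    (c : ℝ) (hc : 0 < c) (r : Fin K → ℝ)
    (Sh : Finset (Fin K)) (l : Fin K)
    (hout : r l > rate h c {l} Sh) :
    ∀ D ⊆ Finset.univ \ Sh, l ∈ D →
      ∃ S ⊆ D, ∑ k ∈ S, r k > rate h c S (Finset.univ \ D) := by
  intro D hD hlD
  have hSh : Sh ⊆ Finset.univ \ D :=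
    Finset.subset_sdiff.2 ⟨Finset.subset_univ Sh, (Finset.subset_sdiff.1 hD).2.symm⟩
  refine ⟨{l}, Finset.singleton_subset_iff.2 hlD, ?_⟩
  rw [Finset.sum_singleton]
  exact (rate_singleton_antitone h hc.le l hSh).trans_lt hout

/-- Correctness of the PruneAircraft step of the Single Successive Algorithm: if user `l`
(outside the outage set `Ŝ`) already fails at rate `r l` under the interference of `Ŝ` alone
(`r l > R_l^{Ŝ}`), then every candidate decodable set `D ⊆ univ ∖ Ŝ` containing `l` fails the
joint-decodability condition (9): some `S ⊆ D` (namely `S = {l}`) has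
`∑_{k ∈ S} r k > R_S^{univ ∖ D}`. -/
theorem stmt_11 {M K : ℕ} (hM : 0 < M) (hK : 0 < K) (h : Fin K → Fin M → ℂ)
    (c : ℝ) (hc : 0 < c) (r : Fin K → ℝ) (hr : ∀ k, 0 < r k)
    (Sh : Finset (Fin K)) (l : Fin K) (hl : l ∉ Sh)
    (hout : r l > rate h c {l} Sh) :
    ∀ D ⊆ Finset.univ \ Sh, l ∈ D →
      ∃ S ⊆ D, ∑ k ∈ S, r k > rate h c S (Finset.univ \ D) :=
  stmt_11_general h c hc r Sh l hout
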